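/- arXiv:1711.01475 — 4 statements merged into one kernel-verified Lean document; each statement's English description precedes it below -/
import Mathlib

section
/- Suppose a/b and c/d are fractions in lowest terms (gcd(a,b) = gcd(c,d) = 1) with b and d odd, a and c of opposite parity, and the cross-difference bc - ad odd. Then after reducing the weighted mediants (2a+c)/(2b+d) and (a+2c)/(b+2d) to lowest terms, both resulting denominators are odd and the numerators of the four fractions a/b, reduced left mediant, reduced right mediant, c/d alternate in parity. -/
/-!
The gcd taken when reducing a mediant divides its denominator `2b + d` (resp. `b + 2d`),
which is odd, so it is odd itself, and dividing by an odd divisor preserves parity.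
Hence the reduced denominators are odd and the reduced numerators have the parity of
`2a + c ≡ c` and `a + 2c ≡ a`; alternation then follows from `a ≢ c (mod 2)`.
-/

namespace Int

theorem odd_of_dvd_odd {m n : ℤ} (hn : Odd n) (hm : m ∣ n) : Odd m :=
  not_even_iff_odd.1 <| mt hm.even (not_even_iff_odd.2 hn)

theorem odd_ediv_iff {m n : ℤ} (hm : m ∣ n) (hm_odd : Odd m) : Odd (n / m) ↔ Odd n := by
  obtain ⟨k, rfl⟩ := hm
  rw [Int.mul_ediv_cancel_left _ (by rintro rfl; exact not_odd_zero hm_odd), Int.odd_mul]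
  exact (and_iff_right hm_odd).symm

theorem odd_ediv_gcd_left_iff {m n : ℤ} (hn : Odd n) :
    Odd (m / (gcd m n : ℤ)) ↔ Odd m :=
  odd_ediv_iff (gcd_dvd_left m n) (odd_of_dvd_odd hn (gcd_dvd_right m n))

theorem odd_ediv_gcd_right {m n : ℤ} (hn : Odd n) : Odd (n / (gcd m n : ℤ)) :=
  (odd_ediv_iff (gcd_dvd_right m n) (odd_of_dvd_odd hn (gcd_dvd_right m n))).2 hn

end Int

theorem reduced_mediants_parity_general (a b c d : ℤ)
    (hbodd : Odd b) (hdodd : Odd d)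
    (hac : Odd a ↔ Even c) :
    Odd ((2 * b + d) / (Int.gcd (2 * a + c) (2 * b + d) : ℤ)) ∧
    Odd ((b + 2 * d) / (Int.gcd (a + 2 * c) (b + 2 * d) : ℤ)) ∧
    (Odd a ↔ Even ((2 * a + c) / (Int.gcd (2 * a + c) (2 * b + d) : ℤ))) ∧
    (Odd ((2 * a + c) / (Int.gcd (2 * a + c) (2 * b + d) : ℤ)) ↔
      Even ((a + 2 * c) / (Int.gcd (a + 2 * c) (b + 2 * d) : ℤ))) ∧
    (Odd ((a + 2 * c) / (Int.gcd (a + 2 * c) (b + 2 * d) : ℤ)) ↔ Even c) := by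
  have hleft_den : Odd (2 * b + d) := (even_two_mul b).add_odd hdodd
  have hright_den : Odd (b + 2 * d) := hbodd.add_even (even_two_mul d)
  have hleft_num : Odd ((2 * a + c) / (Int.gcd (2 * a + c) (2 * b + d) : ℤ)) ↔ Odd c := by
    rw [Int.odd_ediv_gcd_left_iff hleft_den]
    grind
  have hright_num : Odd ((a + 2 * c) / (Int.gcd (a + 2 * c) (b + 2 * d) : ℤ)) ↔ Odd a := by
    rw [Int.odd_ediv_gcd_left_iff hright_den]
    grind
  refine ⟨Int.odd_ediv_gcd_right hleft_den, Int.odd_ediv_gcd_right hright_den, ?_, ?_, ?_⟩ <;>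
    simp only [hleft_num, hright_num, ← Int.not_odd_iff_even] at hac ⊢ <;> tauto

/-- If a/b, c/d are in lowest terms with odd denominators, numerators of
opposite parity, and odd cross-difference, then the reduced mediants have odd
denominators and the four numerators alternate in parity. -/
theorem reduced_mediants_parity (a b c d : ℤ) (hb : 0 < b) (hd : 0 < d)
    (hab : Int.gcd a b = 1) (hcd : Int.gcd c d = 1)
    (hbodd : Odd b) (hdodd : Odd d)
    (hac : Odd a ↔ Even c)
    (hX : Odd (b * c - a * d)) :
    Odd ((2 * b + d) / (Int.gcd (2 * a + c) (2 * b + d) : ℤ)) ∧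
    Odd ((b + 2 * d) / (Int.gcd (a + 2 * c) (b + 2 * d) : ℤ)) ∧
    (Odd a ↔ Even ((2 * a + c) / (Int.gcd (2 * a + c) (2 * b + d) : ℤ))) ∧
    (Odd ((2 * a + c) / (Int.gcd (2 * a + c) (2 * b + d) : ℤ)) ↔
      Even ((a + 2 * c) / (Int.gcd (a + 2 * c) (b + 2 * d) : ℤ))) ∧
    (Odd ((a + 2 * c) / (Int.gcd (a + 2 * c) (b + 2 * d) : ℤ)) ↔ Even c) :=
  reduced_mediants_parity_general a b c d hbodd hdodd hac
end

section
/- Let p/q and r/s be fractions in lowest terms whose cross-difference qr - ps is divisible by 3 but such that the weighted mediants (2p+r)/(2q+s) and (p+2r)/(q+2s) are not reducible by 3 (i.e., 3 does not divide gcd(2p+r, 2q+s)). If the cross-difference of the two mediants, which equals 3(qr - ps), is divisible by 9, then 9 divides both (2p+r)+(p+2r) = 3(p+r) and (2q+s)+(q+2s) = 3(q+s); i.e., 3 divides p+r and 3 divides q+s. -/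
/-- If p/q, r/s are in lowest terms with cross-difference divisible by 3, the
mediants are not reducible by 3, and 9 divides the mediants' cross-difference
3(qr - ps), then 3 divides p + r and 3 divides q + s. -/
theorem mediant_parents_sum_div_three (p q r s : ℤ)
    (hpq : Int.gcd p q = 1) (hrs : Int.gcd r s = 1)
    (h3 : (3 : ℤ) ∣ q * r - p * s)
    (hnored : ¬((3 : ℤ) ∣ 2 * p + r ∧ (3 : ℤ) ∣ 2 * q + s))
    (h9 : (9 : ℤ) ∣ 3 * (q * r - p * s)) :
    (3 : ℤ) ∣ p + r ∧ (3 : ℤ) ∣ q + s := by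
  have hp : ¬((3 : ℤ) ∣ p ∧ (3 : ℤ) ∣ q) := by
    rintro ⟨h1, h2⟩
    have := Int.dvd_gcd h1 h2
    rw [hpq] at this
    norm_num at this
  have hr : ¬((3 : ℤ) ∣ r ∧ (3 : ℤ) ∣ s) := by
    rintro ⟨h1, h2⟩
    have := Int.dvd_gcd h1 h2
    rw [hrs] at this
    norm_num at this
  have key : ∀ a b c d : ZMod 3, ¬(a = 0 ∧ b = 0) → ¬(c = 0 ∧ d = 0) →
      b * c - a * d = 0 → ¬(2 * a + c = 0 ∧ 2 * b + d = 0) →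
      (a + c = 0 ∧ b + d = 0) := by decide
  have := key (p : ZMod 3) (q : ZMod 3) (r : ZMod 3) (s : ZMod 3)
  have cast3 : ∀ x : ℤ, (3 : ℤ) ∣ x ↔ ((x : ZMod 3) = 0) := fun x => by
    rw [ZMod.intCast_zmod_eq_zero_iff_dvd]; norm_num
  simp only [cast3] at hp hr hnored h3 ⊢
  push_cast at hp hr hnored h3 this ⊢
  exact this hp hr h3 hnored
end

section
/- If a ≡ c (mod 9), b ≡ d (mod 9), and 9 divides bc - ad, then 3 divides both 2a + c and 2b + d, and 3 divides both a + 2c and b + 2d. Moreover, if additionally gcd(a,b) = 1, then 9 does not divide gcd(2a+c, 2b+d): the mediants are reduced by a factor of exactly 3. -/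
/-! From `a ≡ c` modulo `n` we get `2a + c ≡ a + 2c ≡ 3a` modulo `n`. Taking `n = 3` gives the
divisibility by 3; taking `n = 9`, a factor 9 in `gcd(2a + c, 2b + d)` would force `3 ∣ a` and
`3 ∣ b`. -/

namespace Int.ModEq

variable {m n a c : ℤ}

theorem two_mul_add_modEq_three_mul (h : a ≡ c [ZMOD n]) : 2 * a + c ≡ 3 * a [ZMOD n] :=
  calc 2 * a + c ≡ 2 * a + a [ZMOD n] := h.symm.add_left _
    _ = 3 * a := by ring

theorem add_two_mul_modEq_three_mul (h : a ≡ c [ZMOD n]) : a + 2 * c ≡ 3 * a [ZMOD n] :=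
  calc a + 2 * c ≡ a + 2 * a [ZMOD n] := (h.symm.mul_left 2).add_left _
    _ = 3 * a := by ring

theorem three_dvd_two_mul_add (h : a ≡ c [ZMOD 3]) : 3 ∣ 2 * a + c :=
  h.two_mul_add_modEq_three_mul.dvd_iff.mpr (dvd_mul_right 3 a)

theorem three_dvd_add_two_mul (h : a ≡ c [ZMOD 3]) : 3 ∣ a + 2 * c :=
  h.add_two_mul_modEq_three_mul.dvd_iff.mpr (dvd_mul_right 3 a)

theorem dvd_of_three_mul_dvd_two_mul_add (h : a ≡ c [ZMOD 3 * m]) (hm : 3 * m ∣ 2 * a + c) :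
    m ∣ a :=
  (mul_dvd_mul_iff_left three_ne_zero).mp (h.two_mul_add_modEq_three_mul.dvd_iff.mp hm)

end Int.ModEq

theorem mediants_reduce_by_exactly_three_general (a b c d : ℤ)
    (hac : a ≡ c [ZMOD 9]) (hbd : b ≡ d [ZMOD 9]) :
    ((3 : ℤ) ∣ 2 * a + c ∧ (3 : ℤ) ∣ 2 * b + d) ∧
    ((3 : ℤ) ∣ a + 2 * c ∧ (3 : ℤ) ∣ b + 2 * d) ∧
    (Int.gcd a b = 1 → ¬ (9 : ℤ) ∣ (Int.gcd (2 * a + c) (2 * b + d) : ℤ)) := by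
  have hac3 : a ≡ c [ZMOD 3] := hac.of_mul_left 3
  have hbd3 : b ≡ d [ZMOD 3] := hbd.of_mul_left 3
  refine ⟨⟨hac3.three_dvd_two_mul_add, hbd3.three_dvd_two_mul_add⟩,
    ⟨hac3.three_dvd_add_two_mul, hbd3.three_dvd_add_two_mul⟩, fun hab h9 => ?_⟩
  have h3a : 3 ∣ a := hac.dvd_of_three_mul_dvd_two_mul_add (h9.trans (Int.gcd_dvd_left _ _))
  have h3b : 3 ∣ b := hbd.dvd_of_three_mul_dvd_two_mul_add (h9.trans (Int.gcd_dvd_right _ _))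
  have h3 : (3 : ℤ) ∣ 1 := by simpa [hab] using Int.dvd_coe_gcd h3a h3b
  norm_num at h3

/-- If a ≡ c and b ≡ d (mod 9) and 9 ∣ bc - ad, then both mediants reduce by 3;
if moreover gcd(a,b) = 1, they reduce by a factor of exactly 3. -/
theorem mediants_reduce_by_exactly_three (a b c d : ℤ)
    (hac : a ≡ c [ZMOD 9]) (hbd : b ≡ d [ZMOD 9])
    (h9 : (9 : ℤ) ∣ b * c - a * d) :
    ((3 : ℤ) ∣ 2 * a + c ∧ (3 : ℤ) ∣ 2 * b + d) ∧
    ((3 : ℤ) ∣ a + 2 * c ∧ (3 : ℤ) ∣ b + 2 * d) ∧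
    (Int.gcd a b = 1 → ¬ (9 : ℤ) ∣ (Int.gcd (2 * a + c) (2 * b + d) : ℤ)) :=
  mediants_reduce_by_exactly_three_general a b c d hac hbd
end

section
/- Define the steeple value function: for a row of length 3^n indexed by i with 0 ≤ i < 3^n, let m(i) be the (1-based) position of the first base-3 digit of i (padded to n digits, most significant first) that is not equal to 1. If i = (3^n - 1)/2 (the all-ones index, i.e., the middle), the cross-difference V_n(i) = 3^n; if m(i) > ⌈n/2⌉, then V_n(i) = 3^{2·m(i) - n - 1}. Prove that these values are consistent with the propagation rule: the middle index propagates from value 3^n in row n to values (3^n, 3^{n+1}, 3^n) at indices ((3^{n+1}-3)/2, (3^{n+1}-1)/2, (3^{n+1}+1)/2) in row n+1, and the two flanking indices have middleness n+1, matching 3^{2(n+1)-(n+1)-1} = 3^n. -/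
/-- The 1-based position of the first base-3 digit of `i` (padded to `n`
digits, most significant first) that is not equal to 1: the middleness of `i`
in a row of length `3^n`. -/
def middleness (n i : ℕ) : ℕ :=
  ((Nat.digits 3 i ++ List.replicate (n - (Nat.digits 3 i).length) 0).reverse.findIdx
    (· ≠ 1)) + 1

/-! The three middle indices of row `n + 1` are `3R`, `3R + 1`, `3R + 2`, where
`R = (3^n - 1)/2` is the base-3 repunit of length `n`. Read most significant digit first, the
flanking ones are `n` ones followed by a `0` or a `2`, so their first non-`1` digit sits at
position `n + 1`. -/

theorem Nat.sub_one_mul_ofDigits_replicate_one_add_one {b : ℕ} (hb : 1 ≤ b) (n : ℕ) :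
    (b - 1) * Nat.ofDigits b (List.replicate n 1) + 1 = b ^ n := by
  induction n with
  | zero => simp
  | succ n ih =>
    rw [List.replicate_succ, Nat.ofDigits_cons, pow_succ, ← ih]
    obtain ⟨c, rfl⟩ := Nat.exists_eq_add_of_le hb
    simp only [Nat.add_sub_cancel_left]
    ring

theorem List.findIdx_replicate_append {α : Type*} {p : α → Bool} {a : α} (ha : p a = false)
    (n : ℕ) (l : List α) :
    (List.replicate n a ++ l).findIdx p = n + l.findIdx p := by
  have hrep : (List.replicate n a).findIdx p = n := by
    simpa using (List.findIdx_eq_length (p := p)).2 fun x hx => (List.eq_of_mem_replicate hx) ▸ ha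
  rw [List.findIdx_append, hrep]
  simp [Nat.add_comm]

theorem middleness_ofDigits {L : List ℕ} (hL : ∀ x ∈ L, x < 3) :
    middleness L.length (Nat.ofDigits 3 L) = L.reverse.findIdx (· ≠ 1) + 1 := by
  have hpad : Nat.digitsAppend 3 L.length (Nat.ofDigits 3 L) = L :=
    (Nat.setInvOn_digitsAppend_ofDigits (by norm_num) L.length).1 ⟨rfl, hL⟩
  -- `middleness` pads `Nat.digits` exactly as `Nat.digitsAppend` does
  conv_rhs => rw [← hpad]
  rfl

theorem middleness_ofDigits_cons_replicate_one {d : ℕ} (hd : d < 3) (hd1 : d ≠ 1) (n : ℕ) :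
    middleness (n + 1) (Nat.ofDigits 3 (d :: List.replicate n 1)) = n + 1 := by
  have hL : ∀ x ∈ d :: List.replicate n 1, x < 3 := by
    simp only [List.mem_cons, List.mem_replicate]
    omega
  have hmid := middleness_ofDigits hL
  simp only [List.length_cons, List.length_replicate] at hmid
  rw [hmid, List.reverse_cons, List.reverse_replicate, List.findIdx_replicate_append (by simp)]
  simp [hd1]

/-- Consistency of the steeple formula with the propagation rule: in row n+1,
the middle index propagates from the middle index of row n, the two indices
flanking the new middle have middleness n+1, and the steeple formula there
gives 3^{2(n+1)-(n+1)-1} = 3^n, matching the propagated values (3^n, 3^{n+1}, 3^n). -/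
theorem steeple_propagation (n : ℕ) :
    (3 ^ (n + 1) - 1) / 2 = 3 * ((3 ^ n - 1) / 2) + 1 ∧
    (3 ^ (n + 1) - 3) / 2 = 3 * ((3 ^ n - 1) / 2) ∧
    (3 ^ (n + 1) + 1) / 2 = 3 * ((3 ^ n - 1) / 2) + 2 ∧
    middleness (n + 1) ((3 ^ (n + 1) - 3) / 2) = n + 1 ∧
    middleness (n + 1) ((3 ^ (n + 1) + 1) / 2) = n + 1 ∧
    3 ^ (2 * (n + 1) - (n + 1) - 1) = 3 ^ n := by
  set R := Nat.ofDigits 3 (List.replicate n 1)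
  have hR : 2 * R + 1 = 3 ^ n :=
    Nat.sub_one_mul_ofDigits_replicate_one_add_one (b := 3) (by norm_num) n
  have hpow : 3 ^ (n + 1) = 3 * 3 ^ n := pow_succ' 3 n
  have hlow : (3 ^ (n + 1) - 3) / 2 = Nat.ofDigits 3 (0 :: List.replicate n 1) := by
    rw [Nat.ofDigits_cons]; omega
  have hhigh : (3 ^ (n + 1) + 1) / 2 = Nat.ofDigits 3 (2 :: List.replicate n 1) := by
    rw [Nat.ofDigits_cons]; omega
  refine ⟨by omega, by omega, by omega, ?_, ?_, congrArg _ (by omega)⟩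
  · rw [hlow, middleness_ofDigits_cons_replicate_one (by norm_num) (by norm_num)]
  · rw [hhigh, middleness_ofDigits_cons_replicate_one (by norm_num) (by norm_num)]
end
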